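/- Let q be a prime power and let u, v be real exponents with 1 ≤ u ≤ 2, u ≤ v < ∞ and (u − 1) v ≤ u (i.e. v ≤ u/(u − 1), with no upper restriction when u = 1). Then for every F : H_1(F_q) → ℂ one has ‖M_{H1} F‖_{ℓ^v(P^1(F_q))} ≤ 2√2 · q^{1/v} · ‖F‖_{ℓ^u(H_1(F_q))}. -/

import Mathlib

/-!
`K` plays the role of the finite field `F_q` with `q = Fintype.card K` elements
(the cardinality of a finite field is automatically a prime power).
The Heisenberg group `H₁(F_q)` is identified with `K × K × K`.
The projective line `P¹(F_q)` is identified with `Option K`, where `some m`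
corresponds to the direction class `[1 : m]` and `none` to `[0 : 1]`
(every class has a unique such normal form).
-/

noncomputable section

open Finset

/-- Representative direction vector of a projective class. -/
def dirVec {K : Type*} [Field K] : Option K → K × K
  | some m => (1, m)
  | none => (0, 1)

/-- The point of the horizontal line through `p = (x₀, y₀, t₀)` with direction
vector `v = (a, b)` corresponding to the parameter `s`, namely
`(x₀ + s a, y₀ + s b, t₀ + s (x₀ b - y₀ a))`. -/
def hPoint {K : Type*} [Field K] (p : K × K × K) (v : K × K) (s : K) : K × K × K :=
  (p.1 + s * v.1, p.2.1 + s * v.2, p.2.2 + s * (p.1 * v.2 - p.2.1 * v.1))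

/-- Sum of `|F|` along the horizontal line through `p` with direction vector `v`. -/
def lineSumH1 {K : Type*} [Field K] [Fintype K] (Fc : K × K × K → ℂ)
    (p : K × K × K) (v : K × K) : ℝ :=
  ∑ s : K, ‖Fc (hPoint p v s)‖

/-- The horizontal Kakeya maximal function `M_{H₁} F` on `P¹(F_q) ≃ Option K`:
the maximum over all base points `p` of the sum of `|F|` along the horizontal
line through `p` in the given direction. -/
def MH1 {K : Type*} [Field K] [Fintype K] (Fc : K × K × K → ℂ) (d : Option K) : ℝ :=
  Finset.univ.sup' ⟨((0 : K), (0 : K), (0 : K)), Finset.mem_univ _⟩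
    fun p => lineSumH1 Fc p (dirVec d)

/-- `ℓ^r` norm of a complex-valued function on a finite set. -/
def lpNormC {X : Type*} [Fintype X] (r : ℝ) (g : X → ℂ) : ℝ :=
  (∑ x, ‖g x‖ ^ r) ^ (1 / r)

/-- `ℓ^r` norm of a real-valued function on a finite set. -/
def lpNormR {X : Type*} [Fintype X] (r : ℝ) (g : X → ℝ) : ℝ :=
  (∑ x, |g x| ^ r) ^ (1 / r)

/-!
Fix, for every direction, a horizontal line realising the maximum. Two horizontal lines with
different directions project to non-parallel lines of the plane, so they meet in at most one
point. Since there are `q + 1` directions and every line has `q` points, Cauchy–Schwarz against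
`∑_d a_d 1_{L_d}` gives the `ℓ²` bound `∑_d (∑_{L_d} h)² ≤ 2q ∑ h²`. This is interpolated by hand
with the trivial bound `∑_{L_d} f ≤ ∑ f`: Hölder on each line, for the splitting
`f = (f^u)^(1-θ) (f^(u/2))^θ` with `θ = 2(u-1)/u`, and then Hölder over the directions for the
remaining exponent `(u-1)v/u ≤ 1`.
-/

open Real

theorem sum_rpow_one_sub_mul_rpow_le {ι : Type*} (s : Finset ι) {a b : ι → ℝ}
    (ha : ∀ i ∈ s, 0 ≤ a i) (hb : ∀ i ∈ s, 0 ≤ b i) {θ : ℝ} (hθ₀ : 0 ≤ θ) (hθ₁ : θ ≤ 1) :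
    ∑ i ∈ s, a i ^ (1 - θ) * b i ^ θ ≤ (∑ i ∈ s, a i) ^ (1 - θ) * (∑ i ∈ s, b i) ^ θ := by
  rcases hθ₀.eq_or_lt with rfl | hθ₀
  · simp
  rcases hθ₁.eq_or_lt with rfl | hθ₁
  · simp
  have key := inner_le_Lp_mul_Lq_of_nonneg s (.one_sub_inv_inv hθ₀ hθ₁)
    (fun i hi => rpow_nonneg (ha i hi) (1 - θ)) (fun i hi => rpow_nonneg (hb i hi) θ)
  rwa [sum_congr rfl fun i hi => rpow_rpow_inv (ha i hi) (sub_pos.2 hθ₁).ne',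
    sum_congr rfl fun i hi => rpow_rpow_inv (hb i hi) hθ₀.ne', one_div, one_div, inv_inv,
    inv_inv] at key

theorem sum_le_sum_rpow_mul_sum_rpow_half {α : Type*} (s : Finset α) {f : α → ℝ} (hf : ∀ z, 0 ≤ f z)
    {u : ℝ} (hu1 : 1 ≤ u) (hu2 : u ≤ 2) :
    ∑ z ∈ s, f z ≤
      (∑ z ∈ s, f z ^ u) ^ ((2 - u) / u) * (∑ z ∈ s, f z ^ (u / 2)) ^ (2 * (u - 1) / u) := by
  have hu : u ≠ 0 := by positivity
  have hθ : (2 - u) / u = 1 - 2 * (u - 1) / u := by field_simp; ring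
  have hexp : u * (1 - 2 * (u - 1) / u) + u / 2 * (2 * (u - 1) / u) = 1 := by field_simp; ring
  have hsplit (z : α) :
      f z = (f z ^ u) ^ (1 - 2 * (u - 1) / u) * (f z ^ (u / 2)) ^ (2 * (u - 1) / u) := by
    rw [← rpow_mul (hf z), ← rpow_mul (hf z), ← rpow_add' (hf z) (by rw [hexp]; exact one_ne_zero),
      hexp, rpow_one]
  rw [hθ]
  calc ∑ z ∈ s, f z = _ := sum_congr rfl fun z _ => hsplit z
    _ ≤ _ := sum_rpow_one_sub_mul_rpow_le s (fun z _ => rpow_nonneg (hf z) _)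
        (fun z _ => rpow_nonneg (hf z) _) (by positivity)
        (by rw [div_le_one (by positivity)]; linarith)

theorem rpow_sum_le_of_sum_rpow_le {α : Type*} (s : Finset α) {f : α → ℝ} (hf : ∀ z, 0 ≤ f z)
    {u v A : ℝ} (hu1 : 1 ≤ u) (hu2 : u ≤ 2) (hv : 0 ≤ v) (hA : ∑ z ∈ s, f z ^ u ≤ A) :
    (∑ z ∈ s, f z) ^ v ≤
      A ^ ((2 - u) / u * v) * ((∑ z ∈ s, f z ^ (u / 2)) ^ 2) ^ ((u - 1) * v / u) := by
  have hfu : 0 ≤ ∑ z ∈ s, f z ^ u := sum_nonneg fun z _ => rpow_nonneg (hf z) u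
  have hb : 0 ≤ ∑ z ∈ s, f z ^ (u / 2) := sum_nonneg fun z _ => rpow_nonneg (hf z) _
  have hA₀ : 0 ≤ A := hfu.trans hA
  calc (∑ z ∈ s, f z) ^ v
      ≤ ((∑ z ∈ s, f z ^ u) ^ ((2 - u) / u) *
          (∑ z ∈ s, f z ^ (u / 2)) ^ (2 * (u - 1) / u)) ^ v := by
        gcongr
        · exact sum_nonneg fun z _ => hf z
        · exact sum_le_sum_rpow_mul_sum_rpow_half _ hf hu1 hu2
    _ ≤ (A ^ ((2 - u) / u) * (∑ z ∈ s, f z ^ (u / 2)) ^ (2 * (u - 1) / u)) ^ v := by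
        have : 0 < u := by positivity
        gcongr
    _ = A ^ ((2 - u) / u * v) * ((∑ z ∈ s, f z ^ (u / 2)) ^ 2) ^ ((u - 1) * v / u) := by
        rw [mul_rpow (rpow_nonneg hA₀ _) (rpow_nonneg hb _), ← rpow_mul hA₀, ← rpow_mul hb,
          ← rpow_two, ← rpow_mul hb]
        ring_nf

section IncidenceBound

variable {ι α : Type*} [Fintype ι] [Fintype α] [DecidableEq α] (L : ι → Finset α)

theorem sum_mul_sum_mem_eq_sum_mul_sum_ite (a : ι → ℝ) (h : α → ℝ) :
    ∑ i, a i * ∑ z ∈ L i, h z = ∑ z, h z * ∑ i, if z ∈ L i then a i else 0 := by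
  have hL : ∀ i, ∑ z ∈ L i, h z = ∑ z, if z ∈ L i then h z else 0 := fun i => by
    rw [sum_ite_mem, univ_inter]
  simp_rw [hL, mul_sum, mul_ite, mul_zero]
  rw [sum_comm]
  simp_rw [mul_comm]

theorem sum_sq_sum_ite_mem (a : ι → ℝ) :
    ∑ z, (∑ i, if z ∈ L i then a i else 0) ^ 2 = ∑ i, ∑ j, a i * a j * #(L i ∩ L j) := by
  have hL : ∀ i j, (#(L i ∩ L j) : ℝ) = ∑ z, if z ∈ L i ∩ L j then 1 else 0 := fun i j => by
    rw [sum_ite_mem, univ_inter, sum_const, nsmul_one]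
  simp_rw [hL, mul_sum, mul_boole, sq, sum_mul_sum, ite_zero_mul_ite_zero, ← mem_inter]
  rw [sum_comm]
  exact sum_congr rfl fun i _ => sum_comm

theorem sum_sq_sum_ite_mem_le [Nonempty ι] {n : ℕ} (hcard : ∀ i, #(L i) ≤ n)
    (hinter : ∀ i j, i ≠ j → #(L i ∩ L j) ≤ 1) {a : ι → ℝ} (ha : ∀ i, 0 ≤ a i) :
    ∑ z, (∑ i, if z ∈ L i then a i else 0) ^ 2 ≤
      (Fintype.card ι + n - 1) * ∑ i, a i ^ 2 := by
  classical
  have hterm : ∀ i j, (#(L i ∩ L j) : ℝ) ≤ 1 + if i = j then (n - 1 : ℝ) else 0 := by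
    intro i j
    split_ifs with hij
    · subst hij
      rw [inter_self, add_sub_cancel]
      exact_mod_cast hcard i
    · simpa using hinter i j hij
  calc ∑ z, (∑ i, if z ∈ L i then a i else 0) ^ 2
      = ∑ i, ∑ j, a i * a j * #(L i ∩ L j) := sum_sq_sum_ite_mem L a
    _ ≤ ∑ i, ∑ j, a i * a j * (1 + if i = j then (n - 1 : ℝ) else 0) := by
      gcongr with i _ j _
      · exact mul_nonneg (ha i) (ha j)
      · exact hterm i j
    _ = (∑ i, a i) ^ 2 + (n - 1) * ∑ i, a i ^ 2 := by
      simp only [mul_add, mul_one, sum_add_distrib, mul_ite, mul_zero, sum_ite_eq, mem_univ,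
        if_true]
      rw [sq, sum_mul_sum, mul_sum]
      exact congrArg _ (sum_congr rfl fun i _ => by ring)
    _ ≤ Fintype.card ι * ∑ i, a i ^ 2 + (n - 1) * ∑ i, a i ^ 2 := by
      gcongr
      exact sq_sum_le_card_mul_sum_sq
    _ = (Fintype.card ι + n - 1) * ∑ i, a i ^ 2 := by ring

theorem sum_sq_sum_le_of_card_inter_le_one [Nonempty ι] {n : ℕ} (hcard : ∀ i, #(L i) ≤ n)
    (hinter : ∀ i j, i ≠ j → #(L i ∩ L j) ≤ 1) {h : α → ℝ} (hh : ∀ z, 0 ≤ h z) :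
    ∑ i, (∑ z ∈ L i, h z) ^ 2 ≤ (Fintype.card ι + n - 1) * ∑ z, h z ^ 2 := by
  set C : ℝ := Fintype.card ι + n - 1
  set a : ι → ℝ := fun i => ∑ z ∈ L i, h z
  set S := ∑ i, a i ^ 2
  have hC : 0 ≤ C := by
    have : (1 : ℝ) ≤ Fintype.card ι := by exact_mod_cast Fintype.card_pos
    have : (0 : ℝ) ≤ n := n.cast_nonneg
    linarith
  have hS : S = ∑ z, h z * ∑ i, if z ∈ L i then a i else 0 := by
    rw [← sum_mul_sum_mem_eq_sum_mul_sum_ite]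
    simp only [S, a, sq]
  have hCS : S ^ 2 ≤ (∑ z, h z ^ 2) * (C * S) :=
    calc S ^ 2 ≤ (∑ z, h z ^ 2) * ∑ z, (∑ i, if z ∈ L i then a i else 0) ^ 2 :=
          hS ▸ sum_mul_sq_le_sq_mul_sq univ _ _
      _ ≤ (∑ z, h z ^ 2) * (C * S) := by
          gcongr
          exact sum_sq_sum_ite_mem_le L hcard hinter fun i => sum_nonneg fun z _ => hh z
  rcases (sum_nonneg fun i _ => sq_nonneg (a i) : 0 ≤ S).eq_or_lt with hS0 | hS0
  · rw [show S = 0 from hS0.symm]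
    positivity
  · nlinarith

theorem sum_rpow_sum_le_of_card_inter_le_one [Nonempty ι] {n : ℕ} (hcard : ∀ i, #(L i) ≤ n)
    (hinter : ∀ i j, i ≠ j → #(L i ∩ L j) ≤ 1) {f : α → ℝ} (hf : ∀ z, 0 ≤ f z)
    {u v C : ℝ} (hu1 : 1 ≤ u) (hu2 : u ≤ 2) (hv : 0 ≤ v) (huv : (u - 1) * v ≤ u)
    (hCι : (Fintype.card ι : ℝ) ≤ C) (hCn : (Fintype.card ι : ℝ) + n - 1 ≤ C) :
    ∑ i, (∑ z ∈ L i, f z) ^ v ≤ C * (∑ z, f z ^ u) ^ (v / u) := by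
  have hu : 0 < u := by positivity
  set A := ∑ z, f z ^ u
  set b : ι → ℝ := fun i => ∑ z ∈ L i, f z ^ (u / 2)
  set s := (u - 1) * v / u
  have hA : 0 ≤ A := sum_nonneg fun z _ => rpow_nonneg (hf z) u
  have hC : 0 ≤ C := (Nat.cast_nonneg _).trans hCι
  have hs₀ : 0 ≤ s := div_nonneg (mul_nonneg (by linarith) hv) hu.le
  have hs₁ : s ≤ 1 := by rw [div_le_one hu]; linarith
  have hb2 : ∑ z, (f z ^ (u / 2)) ^ 2 = A := sum_congr rfl fun z _ => by
    rw [← rpow_two, ← rpow_mul (hf z), div_mul_cancel₀ u two_ne_zero]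
  have hdir : ∑ i, (b i ^ 2) ^ s ≤ C ^ (1 - s) * (C * A) ^ s :=
    calc ∑ i, (b i ^ 2) ^ s = ∑ i, (1 : ℝ) ^ (1 - s) * (b i ^ 2) ^ s := by simp
      _ ≤ (Fintype.card ι : ℝ) ^ (1 - s) * (∑ i, b i ^ 2) ^ s := by
          simpa using sum_rpow_one_sub_mul_rpow_le univ (fun _ _ => zero_le_one)
            (fun i _ => sq_nonneg (b i)) hs₀ hs₁
      _ ≤ C ^ (1 - s) * (C * A) ^ s := by
          gcongr
          rw [← hb2]
          exact (sum_sq_sum_le_of_card_inter_le_one L hcard hinter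
            fun z => rpow_nonneg (hf z) _).trans (by gcongr)
  calc ∑ i, (∑ z ∈ L i, f z) ^ v ≤ ∑ i, A ^ ((2 - u) / u * v) * (b i ^ 2) ^ s :=
        sum_le_sum fun i _ => rpow_sum_le_of_sum_rpow_le _ hf hu1 hu2 hv <|
          sum_le_sum_of_subset_of_nonneg (subset_univ _) fun z _ _ => rpow_nonneg (hf z) u
    _ = A ^ ((2 - u) / u * v) * ∑ i, (b i ^ 2) ^ s := (mul_sum ..).symm
    _ ≤ A ^ ((2 - u) / u * v) * (C ^ (1 - s) * (C * A) ^ s) := by gcongr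
    _ = (C ^ (1 - s) * C ^ s) * (A ^ ((2 - u) / u * v) * A ^ s) := by
      rw [mul_rpow hC hA]
      ring
    _ = C * A ^ (v / u) := by
      rw [← rpow_add' hC (by simp), sub_add_cancel, rpow_one,
        ← rpow_add_of_nonneg hA (mul_nonneg (div_nonneg (by linarith) hu.le) hv) hs₀]
      congr 2
      simp only [s]
      field_simp
      ring

end IncidenceBound

section Heisenberg

variable {K : Type*} [Field K]

theorem dirVec_ne_zero (d : Option K) : dirVec d ≠ 0 := by
  cases d <;> simp [dirVec]

theorem dirVec_det_ne_zero {d d' : Option K} (h : d ≠ d') :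
    (dirVec d).1 * (dirVec d').2 - (dirVec d).2 * (dirVec d').1 ≠ 0 := by
  rcases d with _ | m <;> rcases d' with _ | m'
  · exact absurd rfl h
  · simp [dirVec]
  · simp [dirVec]
  · simpa [dirVec, sub_eq_zero, eq_comm] using h

theorem hPoint_injective (p : K × K × K) {v : K × K} (hv : v ≠ 0) :
    Function.Injective (hPoint p v) := by
  intro s t hst
  have h1 := congrArg (·.1) hst
  have h2 := congrArg (·.2.1) hst
  simp only [hPoint, add_right_inj, mul_eq_mul_right_iff] at h1 h2
  by_contra hne
  exact hv (Prod.ext (h1.resolve_left hne) (h2.resolve_left hne))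

theorem eq_of_hPoint_eq_hPoint {p p' : K × K × K} {v w : K × K}
    (hvw : v.1 * w.2 - v.2 * w.1 ≠ 0) {s₁ s₂ t₁ t₂ : K}
    (h₁ : hPoint p v s₁ = hPoint p' w t₁) (h₂ : hPoint p v s₂ = hPoint p' w t₂) : s₁ = s₂ := by
  have e₁ := congrArg (·.1) h₁
  have e₂ := congrArg (·.2.1) h₁
  have e₁' := congrArg (·.1) h₂
  have e₂' := congrArg (·.2.1) h₂
  simp only [hPoint] at e₁ e₂ e₁' e₂'
  have : (s₁ - s₂) * (v.1 * w.2 - v.2 * w.1) = 0 := by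
    linear_combination w.2 * (e₁ - e₁') - w.1 * (e₂ - e₂')
  exact sub_eq_zero.1 ((mul_eq_zero.1 this).resolve_right hvw)

variable [Fintype K]

def hLine (p : K × K × K) (d : Option K) : Finset (K × K × K) :=
  univ.map ⟨hPoint p (dirVec d), hPoint_injective p (dirVec_ne_zero d)⟩

theorem card_hLine (p : K × K × K) (d : Option K) : #(hLine p d) = Fintype.card K := by
  simp [hLine]

theorem lineSumH1_eq_sum_hLine (Fc : K × K × K → ℂ) (p : K × K × K) (d : Option K) :
    lineSumH1 Fc p (dirVec d) = ∑ z ∈ hLine p d, ‖Fc z‖ := by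
  simp [hLine, lineSumH1]

theorem card_hLine_inter_le_one [DecidableEq K] {d d' : Option K} (h : d ≠ d')
    (p p' : K × K × K) : #(hLine p d ∩ hLine p' d') ≤ 1 := by
  refine card_le_one.2 fun x hx y hy => ?_
  simp only [hLine, mem_inter, mem_map, mem_univ, true_and, Function.Embedding.coeFn_mk] at hx hy
  obtain ⟨⟨s₁, rfl⟩, t₁, ht₁⟩ := hx
  obtain ⟨⟨s₂, rfl⟩, t₂, ht₂⟩ := hy
  rw [eq_of_hPoint_eq_hPoint (dirVec_det_ne_zero h) ht₁.symm ht₂.symm]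

theorem exists_MH1_eq_sum_hLine (Fc : K × K × K → ℂ) (d : Option K) :
    ∃ p, MH1 Fc d = ∑ z ∈ hLine p d, ‖Fc z‖ := by
  obtain ⟨p, -, hp⟩ := exists_mem_eq_sup' _ fun p => lineSumH1 Fc p (dirVec d)
  exact ⟨p, (lineSumH1_eq_sum_hLine Fc p d) ▸ hp⟩

theorem sum_rpow_sum_hLine_le (P : Option K → K × K × K) {f : K × K × K → ℝ}
    (hf : ∀ z, 0 ≤ f z) {u v : ℝ} (hu1 : 1 ≤ u) (hu2 : u ≤ 2) (hv : 0 ≤ v)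
    (huv : (u - 1) * v ≤ u) :
    ∑ d, (∑ z ∈ hLine (P d) d, f z) ^ v ≤ 2 * Fintype.card K * (∑ z, f z ^ u) ^ (v / u) := by
  classical
  have hq : (1 : ℝ) ≤ Fintype.card K := Nat.one_le_cast.2 Fintype.card_pos
  exact sum_rpow_sum_le_of_card_inter_le_one (fun d => hLine (P d) d) (n := Fintype.card K)
    (fun d => (card_hLine _ d).le) (fun d d' h => card_hLine_inter_le_one h _ _) hf hu1 hu2 hv huv
    (by rw [Fintype.card_option, Nat.cast_succ]; linarith)
    (by rw [Fintype.card_option, Nat.cast_succ]; linarith)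

end Heisenberg

/-- For `1 ≤ u ≤ 2`, `u ≤ v < ∞` with `(u - 1) v ≤ u`
(i.e. `v ≤ u/(u-1)`, no upper restriction if `u = 1`),
`‖M_{H₁} F‖_{ℓ^v(P¹(F_q))} ≤ 2√2 · q^{1/v} · ‖F‖_{ℓ^u(H₁(F_q))}`. -/
theorem stmt_8 {K : Type*} [Field K] [Fintype K] (u v : ℝ) (hu1 : 1 ≤ u)
    (hu2 : u ≤ 2) (huv : u ≤ v) (hvu : (u - 1) * v ≤ u) (Fc : K × K × K → ℂ) :
    lpNormR v (MH1 Fc) ≤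
      2 * Real.sqrt 2 * (Fintype.card K : ℝ) ^ (1 / v) * lpNormC u Fc := by
  choose P hP using exists_MH1_eq_sum_hLine Fc
  set q : ℝ := (Fintype.card K : ℝ)
  set A := ∑ z, ‖Fc z‖ ^ u
  have hv : 0 < v := by linarith
  have hA : 0 ≤ A := sum_nonneg fun z _ => rpow_nonneg (norm_nonneg _) u
  have htwo : (2 : ℝ) ^ (1 / v) ≤ 2 * √2 :=
    (rpow_le_self_of_one_le one_le_two ((div_le_one hv).2 (by linarith))).trans
      (le_mul_of_one_le_right zero_le_two (one_le_sqrt.2 one_le_two))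
  calc lpNormR v (MH1 Fc) = (∑ d, (∑ z ∈ hLine (P d) d, ‖Fc z‖) ^ v) ^ (1 / v) := by
        simp only [lpNormR, hP, abs_of_nonneg (sum_nonneg fun _ _ => norm_nonneg _)]
    _ ≤ (2 * q * A ^ (v / u)) ^ (1 / v) := by
        gcongr
        exact sum_rpow_sum_hLine_le P (fun z => norm_nonneg _) hu1 hu2 hv.le hvu
    _ = 2 ^ (1 / v) * q ^ (1 / v) * lpNormC u Fc := by
        rw [mul_rpow (by positivity) (rpow_nonneg hA _), mul_rpow zero_le_two (by positivity),
          ← rpow_mul hA, lpNormC]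
        congr 2
        field_simp
    _ ≤ 2 * √2 * q ^ (1 / v) * lpNormC u Fc := by
        unfold lpNormC
        gcongr
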